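/- Let G be a rooted binary tree displaying each tree in a set 𝒢 = {G_1,...,G_k}. Then the bipartition (L(x_l), L(x_r)) induced by the root x of G satisfies: for every i with 1 ≤ i ≤ k, either L(G_i) ⊆ L(x_l), or L(G_i) ⊆ L(x_r), or L(G_{i,l}) ⊆ L(x_l) and L(G_{i,r}) ⊆ L(x_r), or L(G_{i,l}) ⊆ L(x_r) and L(G_{i,r}) ⊆ L(x_l). -/
import Mathlib


inductive BTree (α : Type) where
  | leaf : α → BTree α
  | node : BTree α → BTree α → BTree α
deriving DecidableEq

namespace BTree

variable {α : Type} [DecidableEq α] {σ : Type} [DecidableEq σ] {γ : Type} [DecidableEq γ]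

/-- leaf (label) set of a tree -/
def leaves : BTree α → Finset α
  | leaf a => {a}
  | node l r => leaves l ∪ leaves r

/-- the leaf labels are pairwise distinct -/
def nodupLeaves : BTree α → Prop
  | leaf _ => True
  | node l r => nodupLeaves l ∧ nodupLeaves r ∧ Disjoint (leaves l) (leaves r)

/-- the (unordered) bipartition `(Ll, Lr)` is compatible with the tree:
the whole leaf set lies in one part, or the leaf sets of the two root child
subtrees lie in opposite parts. -/
def compatible : BTree α → Finset α → Finset α → Prop
  | leaf a, Ll, Lr => a ∈ Ll ∨ a ∈ Lr
  | node l r, Ll, Lr =>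
      leaves l ∪ leaves r ⊆ Ll ∨ leaves l ∪ leaves r ⊆ Lr ∨
      (leaves l ⊆ Ll ∧ leaves r ⊆ Lr) ∨ (leaves l ⊆ Lr ∧ leaves r ⊆ Ll)

/-- union of the leaf sets of a list of trees -/
def unionLeaves (Gs : List (BTree α)) : Finset α :=
  Gs.foldr (fun g acc => leaves g ∪ acc) ∅

/-- `(Ll, Lr)` is a bipartition of the union of the leaf sets (both parts
nonempty) compatible with every tree in the list. -/
def isCompBip (Gs : List (BTree α)) (Ll Lr : Finset α) : Prop :=
  Ll ∪ Lr = unionLeaves Gs ∧ Disjoint Ll Lr ∧ Ll.Nonempty ∧ Lr.Nonempty ∧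
    ∀ G ∈ Gs, compatible G Ll Lr

/-- restriction `G|_L` : remove the leaves not in `L` and suppress the
resulting degree-2 nodes; `none` if no leaf of `G` lies in `L`. -/
def restrict : BTree α → Finset α → Option (BTree α)
  | leaf a, L => if a ∈ L then some (leaf a) else none
  | node l r, L =>
      match restrict l L, restrict r L with
      | some l', some r' => some (node l' r')
      | some l', none => some l'
      | none, some r' => some r'
      | none, none => none

/-- isomorphism of rooted leaf-labeled trees (children are unordered) -/
inductive Iso : BTree α → BTree α → Prop
  | leaf (a : α) : Iso (leaf a) (leaf a)
  | node {l r l' r' : BTree α} : Iso l l' → Iso r r' → Iso (node l r) (node l' r')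
  | swap {l r l' r' : BTree α} : Iso l r' → Iso r l' → Iso (node l r) (node l' r')

/-- `G` displays `G'` : the restriction of `G` to the leaves of `G'` is
isomorphic to `G'` (preserving leaf labels). -/
def displays (G G' : BTree α) : Prop :=
  ∃ t, restrict G (leaves G') = some t ∧ Iso t G'

/-- `Subtree t T` : `t` is a complete rooted subtree of `T` (i.e. `t = T[x]`
for some node `x` of `T`).  Equivalently, the root of `T` is a (weak)
ancestor of the root of `t`. -/
inductive Subtree : BTree α → BTree α → Prop
  | refl (t : BTree α) : Subtree t t
  | left {t l r : BTree α} : Subtree t l → Subtree t (node l r)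
  | right {t l r : BTree α} : Subtree t r → Subtree t (node l r)

/-- two nodes (complete subtrees) are separated: neither is a (weak)
ancestor of the other -/
def separated (u v : BTree α) : Prop := ¬ Subtree u v ∧ ¬ Subtree v u

/-- the subtree rooted at the lowest common ancestor of the leaf set `L` -/
def lcaSub : BTree α → Finset α → BTree α
  | leaf a, _ => leaf a
  | node l r, L =>
      if L ⊆ leaves l then lcaSub l L
      else if L ⊆ leaves r then lcaSub r L
      else node l r

/-- `T1` and `T2` induce the same rooted triplet topology on `{a, b, c}` -/
def sameTriplet (T1 T2 : BTree α) (a b c : α) : Prop :=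
  ∃ t1 t2, restrict T1 {a, b, c} = some t1 ∧ restrict T2 {a, b, c} = some t2 ∧ Iso t1 t2

/-- `GTR` is triplet respecting w.r.t. `GInit` and the family `Gs` : for any
three leaves taken from three distinct trees of `Gs`, `GInit` and `GTR`
induce the same rooted triplet topology. -/
def tripletRespecting (GInit GTR : BTree α) (Gs : List (BTree α)) : Prop :=
  ∀ G1 ∈ Gs, ∀ G2 ∈ Gs, ∀ G3 ∈ Gs, G1 ≠ G2 → G1 ≠ G3 → G2 ≠ G3 →
    ∀ a ∈ leaves G1, ∀ b ∈ leaves G2, ∀ c ∈ leaves G3, sameTriplet GInit GTR a b c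

/-- at least two (distinct) trees of `Gs` are subtrees of `t` : `|𝒢(t)| ≥ 2` -/
def atLeastTwo (Gs : List (BTree α)) (t : BTree α) : Prop :=
  ∃ Gi ∈ Gs, ∃ Gj ∈ Gs, Gi ≠ Gj ∧ Subtree Gi t ∧ Subtree Gj t

/-- `Graft T' T R` : `R` is obtained from `T` by grafting `T'` at some node
`x*` of `T`, i.e. subdividing the edge above `x*` (or adding a new root if
`x*` is the root) and attaching `T'` as the new sibling of `x*`. -/
inductive Graft (T' : BTree α) : BTree α → BTree α → Prop
  | atRootL (T : BTree α) : Graft T' T (node T' T)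
  | atRootR (T : BTree α) : Graft T' T (node T T')
  | left {l r g : BTree α} : Graft T' l g → Graft T' (node l r) (node g r)
  | right {l r g : BTree α} : Graft T' r g → Graft T' (node l r) (node l g)

/-- number of edges from the root of `u` down to the node `v`, if `v` is a
node (complete subtree) of `u` -/
def edist : BTree σ → BTree σ → Option ℕ
  | leaf a, v => if leaf a = v then some 0 else none
  | node l r, v =>
      if node l r = v then some 0 else
      match edist l v, edist r v with
      | some n, _ => some (n + 1)
      | none, some n => some (n + 1)
      | none, none => none

/-- number of nodes strictly between an ancestor `u` and a descendant `v` -/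
def inter (u v : BTree σ) : ℕ := (edist u v).getD 1 - 1

/-- node (`lca`) of the species tree `S` associated to a set `L` of genes -/
def specOf (S : BTree σ) (s : γ → σ) (L : Finset γ) : BTree σ := lcaSub S (L.image s)

/-- the species-tree node `s(x)` associated with a gene-tree node `x`
(lca of the species of the leaves below `x`) -/
def spec (S : BTree σ) (s : γ → σ) (t : BTree γ) : BTree σ := specOf S s (leaves t)

/-- the local LCA-reconciliation cost of a node whose own mapping is `su`
and whose children map to `sl` and `sr` -/
def localCost (su sl sr : BTree σ) : ℕ :=
  inter su sl + inter su sr +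
    (if su = sl ∧ su = sr then 1 else if su = sl ∨ su = sr then 2 else 0)

/-- number of duplication nodes of the LCA-reconciliation -/
def dupCount (S : BTree σ) (s : γ → σ) : BTree γ → ℕ
  | leaf _ => 0
  | node l r =>
      dupCount S s l + dupCount S s r +
      (if spec S s (node l r) = spec S s l ∨ spec S s (node l r) = spec S s r then 1 else 0)

/-- minimum number of losses of the LCA-reconciliation: for each edge `(x,c)`,
`inter(s(x), s(c))` losses, plus one more loss for each child `c` of a
duplication node `x` with `s(c) ≠ s(x)` -/
def lossCount (S : BTree σ) (s : γ → σ) : BTree γ → ℕ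
  | leaf _ => 0
  | node l r =>
      lossCount S s l + lossCount S s r +
      (if spec S s (node l r) = spec S s l ∨ spec S s (node l r) = spec S s r then
        (inter (spec S s (node l r)) (spec S s l) +
          if spec S s l = spec S s (node l r) then 0 else 1) +
        (inter (spec S s (node l r)) (spec S s r) +
          if spec S s r = spec S s (node l r) then 0 else 1)
      else
        inter (spec S s (node l r)) (spec S s l) + inter (spec S s (node l r)) (spec S s r))

/-- sum over all internal nodes of the local LCA-reconciliation costs -/
def totalLocal (S : BTree σ) (s : γ → σ) : BTree γ → ℕ
  | leaf _ => 0
  | node l r =>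
      totalLocal S s l + totalLocal S s r +
      localCost (spec S s (node l r)) (spec S s l) (spec S s r)

/-- `G` is a supertree for `Gs` : a tree on the union of the leaf sets
(each leaf once) displaying every tree of `Gs` -/
def isSupertree (Gs : List (BTree γ)) (G : BTree γ) : Prop :=
  leaves G = unionLeaves Gs ∧ nodupLeaves G ∧ ∀ Gi ∈ Gs, displays G Gi

/-- `MinSGT` : minimum LCA-reconciliation cost over all supertrees -/
noncomputable def reconMin (S : BTree σ) (s : γ → σ) (Gs : List (BTree γ)) : ℕ :=
  sInf {c | ∃ G : BTree γ, isSupertree Gs G ∧ totalLocal S s G = c}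

/-- restrictions `G_i|_L` of the trees of the list (dropping empty ones) -/
def restrictList (Gs : List (BTree γ)) (L : Finset γ) : List (BTree γ) :=
  Gs.filterMap fun G => restrict G L

/-- the four possible ordered choices for distributing a tree into the two
parts of a bipartition: whole tree left, whole tree right, left subtree
left & right subtree right, left subtree right & right subtree left -/
def pick : BTree α → ℕ → Finset α × Finset α
  | G, 0 => (leaves G, ∅)
  | G, 1 => (∅, leaves G)
  | node l r, 2 => (leaves l, leaves r)
  | node l r, _ => (leaves r, leaves l)
  | G, _ => (∅, leaves G)

/-- left part produced by a distribution `f` of choices -/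
def partsLeft (Gs : List (BTree α)) (f : Fin Gs.length → Fin 4) : Finset α :=
  Finset.univ.biUnion fun i => (pick (Gs.get i) (f i).val).1

/-- right part produced by a distribution `f` of choices -/
def partsRight (Gs : List (BTree α)) (f : Fin Gs.length → Fin 4) : Finset α :=
  Finset.univ.biUnion fun i => (pick (Gs.get i) (f i).val).2

/-- the complete subtree at a position (path from the root) -/
def subtreeAt : BTree α → List Bool → Option (BTree α)
  | t, [] => some t
  | leaf _, _ :: _ => none
  | node l _, false :: p => subtreeAt l p
  | node _ r, true :: p => subtreeAt r p

/-- the set of positions of internal nodes -/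
def internalPos : BTree α → Finset (List Bool)
  | leaf _ => ∅
  | node l r =>
      insert [] ((internalPos l).image (List.cons false) ∪
        (internalPos r).image (List.cons true))

end BTree

/-- labeled gene trees: each internal node carries `true` (Dup) or `false` (Spec) -/
inductive LTree (α : Type) where
  | leaf : α → LTree α
  | node : Bool → LTree α → LTree α → LTree α
deriving DecidableEq

namespace LTree

variable {α : Type} [DecidableEq α]

def leaves : LTree α → Finset α
  | leaf a => {a}
  | node _ l r => leaves l ∪ leaves r

/-- underlying unlabeled tree -/
def shape : LTree α → BTree α
  | leaf a => BTree.leaf a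
  | node _ l r => BTree.node (shape l) (shape r)

/-- the event label of the root (`none` for a leaf) -/
def rootEv : LTree α → Option Bool
  | leaf _ => none
  | node e _ _ => some e

inductive Subtree : LTree α → LTree α → Prop
  | refl (t : LTree α) : Subtree t t
  | left {t l r : LTree α} {e : Bool} : Subtree t l → Subtree t (node e l r)
  | right {t l r : LTree α} {e : Bool} : Subtree t r → Subtree t (node e l r)

/-- the subtree rooted at the lowest common ancestor of the leaf set `L` -/
def lcaSub : LTree α → Finset α → LTree α
  | leaf a, _ => leaf a
  | node e l r, L =>
      if L ⊆ leaves l then lcaSub l L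
      else if L ⊆ leaves r then lcaSub r L
      else node e l r

/-- `G` displays `G'` (topologically, ignoring labels) -/
def displaysL (G G' : LTree α) : Prop := BTree.displays (shape G) (shape G')

/-- `(G, ev_G)` is label-compatible with `(G', ev_{G'})` : every internal
node `x'` of `G'` has the same event label as `lca_G(L(x'))` -/
def labelCompatible (G G' : LTree α) : Prop :=
  ∀ (e : Bool) (l r : LTree α), Subtree (node e l r) G' →
    rootEv (lcaSub G (leaves (node e l r))) = some e

end LTree

namespace BTree

lemma leaves_restrict_none {α : Type} [DecidableEq α] :
    ∀ (G : BTree α) (L : Finset α), restrict G L = none → G.leaves ∩ L = ∅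
  | leaf a, L => by
    simp only [restrict]
    split
    · intro h; exact absurd h (by simp)
    · intro _; simp [leaves, Finset.singleton_inter_of_notMem, *]
  | node l r, L => by
    intro h
    simp only [restrict] at h
    rcases hl : restrict l L with _ | l' <;> rcases hr : restrict r L with _ | r' <;>
      rw [hl, hr] at h <;> try simp at h
    have h1 := leaves_restrict_none l L hl
    have h2 := leaves_restrict_none r L hr
    simp [leaves, Finset.union_inter_distrib_right, h1, h2]

lemma leaves_restrict {α : Type} [DecidableEq α] :
    ∀ (G : BTree α) (L : Finset α) (t : BTree α),
      restrict G L = some t → t.leaves = G.leaves ∩ L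
  | leaf a, L, t => by
    simp only [restrict]
    split
    · intro h; injection h with h; subst h
      simp [leaves, Finset.singleton_inter_of_mem, *]
    · intro h; exact absurd h (by simp)
  | node l r, L, t => by
    simp only [restrict]
    rcases hl : restrict l L with _ | l' <;> rcases hr : restrict r L with _ | r' <;>
      intro h
    · exact absurd h (by simp)
    · injection h with h; subst h
      have := leaves_restrict r L r' hr
      have hln : l.leaves ∩ L = ∅ := leaves_restrict_none l L hl
      simp [leaves, Finset.union_inter_distrib_right, this, hln]
    · injection h with h; subst h
      have := leaves_restrict l L l' hl
      have hrn : r.leaves ∩ L = ∅ := leaves_restrict_none r L hr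
      simp [leaves, Finset.union_inter_distrib_right, this, hrn]
    · injection h with h; subst h
      have h1 := leaves_restrict l L l' hl
      have h2 := leaves_restrict r L r' hr
      simp [leaves, Finset.union_inter_distrib_right, h1, h2]

lemma Iso.leaves_eq {α : Type} [DecidableEq α] {t t' : BTree α} (h : Iso t t') :
    t.leaves = t'.leaves := by
  induction h with
  | leaf a => rfl
  | node _ _ ih1 ih2 => simp [leaves, ih1, ih2]
  | swap _ _ ih1 ih2 => simp [leaves, ih1, ih2, Finset.union_comm]

end BTree

/-- the bipartition induced by the root of a supertree is
compatible with every displayed input tree. -/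
theorem stmt1 {α : Type} [DecidableEq α] (Gl Gr : BTree α) (Gs : List (BTree α))
    (hnd : (BTree.node Gl Gr).nodupLeaves)
    (hdisp : ∀ Gi ∈ Gs, (BTree.node Gl Gr).displays Gi) :
    ∀ Gi ∈ Gs, Gi.compatible Gl.leaves Gr.leaves := by
  intro Gi hGi
  obtain ⟨t, ht, hiso⟩ := hdisp Gi hGi
  have hlv : t.leaves = Gi.leaves := hiso.leaves_eq
  have htl : t.leaves = (BTree.node Gl Gr).leaves ∩ Gi.leaves :=
    BTree.leaves_restrict _ _ _ ht
  cases Gi with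
  | leaf a =>
    have ha : a ∈ (BTree.node Gl Gr).leaves := by
      have : a ∈ t.leaves := by rw [hlv]; simp [BTree.leaves]
      rw [htl] at this
      exact (Finset.mem_inter.mp this).1
    simpa [BTree.leaves, BTree.compatible] using ha
  | node l r =>
    set L := (BTree.node l r).leaves with hL
    simp only [BTree.restrict] at ht
    rcases hl : BTree.restrict Gl L with _ | l' <;>
      rcases hr : BTree.restrict Gr L with _ | r' <;>
      rw [hl, hr] at ht
    · exact absurd ht (by simp)
    · -- whole tree in right part
      injection ht with ht; subst ht
      have h2 := BTree.leaves_restrict Gr L r' hr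
      have h1 := BTree.leaves_restrict_none Gl L hl
      right; left
      intro x hx
      have hxL : x ∈ L := by simpa [hL, BTree.leaves] using hx
      have hx' : x ∈ L := hx
      rw [← hlv, h2] at hx'
      exact (Finset.mem_inter.mp hx').1
    · injection ht with ht; subst ht
      have h2 := BTree.leaves_restrict Gl L l' hl
      left
      intro x hx
      have hx' : x ∈ L := by simpa [hL, BTree.leaves] using hx
      rw [← hlv, h2] at hx'
      exact (Finset.mem_inter.mp hx').1
    · injection ht with ht; subst ht
      have h1 := BTree.leaves_restrict Gl L l' hl
      have h2 := BTree.leaves_restrict Gr L r' hr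
      cases hiso with
      | node hil hir =>
        right; right; left
        constructor
        · intro x hx
          have : x ∈ l'.leaves := by rw [hil.leaves_eq]; exact hx
          rw [h1] at this; exact (Finset.mem_inter.mp this).1
        · intro x hx
          have : x ∈ r'.leaves := by rw [hir.leaves_eq]; exact hx
          rw [h2] at this; exact (Finset.mem_inter.mp this).1
      | swap hil hir =>
        right; right; right
        constructor
        · intro x hx
          have : x ∈ r'.leaves := by rw [hir.leaves_eq]; exact hx
          rw [h2] at this; exact (Finset.mem_inter.mp this).1
        · intro x hx
          have : x ∈ l'.leaves := by rw [hil.leaves_eq]; exact hx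
          rw [h1] at this; exact (Finset.mem_inter.mp this).1
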